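/- In the monoid G⁺_{B_ii} = ⟨ a, b, c | cbb = bba, ab = bc, ac = ca ⟩_mo, any element w containing the letter b at least 4 times is divisible by Δ₀ = bbb both from the left and from the right. -/

import Mathlib

/-- The three generators of the monoid of type B_ii. -/
inductive BGen : Type
  | a : BGen
  | b : BGen
  | c : BGen
deriving DecidableEq

/-- The defining relations cbb = bba, ab = bc, ac = ca. -/
inductive BRel : FreeMonoid BGen → FreeMonoid BGen → Prop
  | cbb : BRel (FreeMonoid.of BGen.c * FreeMonoid.of BGen.b * FreeMonoid.of BGen.b)
               (FreeMonoid.of BGen.b * FreeMonoid.of BGen.b * FreeMonoid.of BGen.a)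
  | ab : BRel (FreeMonoid.of BGen.a * FreeMonoid.of BGen.b)
              (FreeMonoid.of BGen.b * FreeMonoid.of BGen.c)
  | ac : BRel (FreeMonoid.of BGen.a * FreeMonoid.of BGen.c)
              (FreeMonoid.of BGen.c * FreeMonoid.of BGen.a)

/-- The monoid G⁺_{B_ii} = ⟨ a, b, c ∣ cbb = bba, ab = bc, ac = ca ⟩_mo. -/
abbrev BMonoid : Type := (conGen BRel).Quotient

/-- The images of the generators in the monoid. -/
def bA : BMonoid := (conGen BRel).mk' (FreeMonoid.of BGen.a)
def bB : BMonoid := (conGen BRel).mk' (FreeMonoid.of BGen.b)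
def bC : BMonoid := (conGen BRel).mk' (FreeMonoid.of BGen.c)
/-!
Δ₀ = bbb commutes with each generator (abbb = bcbb = bbba and cbbb = bbab = bbbc), so it is
central. Using ab = bc and ac = ca, the a's standing before the first b of a word can be pushed
past it, so a word containing b equals cⁱ b u. Doing this twice and using cⁱbb = bbaⁱ, a word
containing two b's equals aʲ bb u. Applying this twice, a word containing four b's equals
aˢ bb aᵗ bb v = aˢ cᵗ bbbb v = Δ₀ aˢ cᵗ b v, and centrality moves Δ₀ to the right end.
-/

local notation "Δ₀" => bB * bB * bB

namespace BMonoid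

theorem c_mul_b_mul_b : bC * bB * bB = bB * bB * bA :=
  (Con.eq _).mpr (ConGen.Rel.of _ _ BRel.cbb)

theorem a_mul_b : bA * bB = bB * bC :=
  (Con.eq _).mpr (ConGen.Rel.of _ _ BRel.ab)

theorem a_mul_c : bA * bC = bC * bA :=
  (Con.eq _).mpr (ConGen.Rel.of _ _ BRel.ac)

theorem b_mul_c_pow (n : ℕ) : bB * bC ^ n = bA ^ n * bB :=
  (SemiconjBy.pow_right a_mul_b.symm n :)

theorem c_pow_mul_b_mul_b (n : ℕ) : bC ^ n * (bB * bB) = bB * bB * bA ^ n :=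
  (SemiconjBy.pow_right (a := bB * bB) (x := bA) (y := bC)
    (show bB * bB * bA = bC * (bB * bB) by rw [← mul_assoc, c_mul_b_mul_b]) n).symm

theorem commute_delta_a : Commute Δ₀ bA := Eq.symm <| calc
  bA * Δ₀ = bB * (bC * bB * bB) := by rw [← mul_assoc, ← mul_assoc, a_mul_b]; simp only [mul_assoc]
  _ = Δ₀ * bA := by rw [c_mul_b_mul_b]; simp only [mul_assoc]

theorem commute_delta_c : Commute Δ₀ bC := Eq.symm <| calc
  bC * Δ₀ = bC * bB * bB * bB := by simp only [mul_assoc]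
  _ = bB * bB * (bA * bB) := by rw [c_mul_b_mul_b, mul_assoc]
  _ = Δ₀ * bC := by rw [a_mul_b]; simp only [mul_assoc]

theorem commute_delta_of (x : BGen) : Commute Δ₀ ((conGen BRel).mk' (FreeMonoid.of x)) := by
  cases x
  · exact commute_delta_a
  · exact ((Commute.refl bB).mul_left (Commute.refl bB)).mul_left (Commute.refl bB)
  · exact commute_delta_c

theorem commute_delta (g : BMonoid) : Commute Δ₀ g := by
  induction g using Con.induction_on with
  | H w =>
    induction w using FreeMonoid.inductionOn' with
    | one => exact Commute.one_right _
    | of_mul x w ih => exact (commute_delta_of x).mul_right ih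

def ofWord (l : List BGen) : BMonoid := (conGen BRel).mk' (FreeMonoid.ofList l)

theorem ofWord_cons (x : BGen) (l : List BGen) :
    ofWord (x :: l) = (conGen BRel).mk' (FreeMonoid.of x) * ofWord l :=
  map_mul (conGen BRel).mk' (FreeMonoid.of x) (FreeMonoid.ofList l)

theorem ofWord_append (l m : List BGen) : ofWord (l ++ m) = ofWord l * ofWord m :=
  map_mul (conGen BRel).mk' _ _

theorem ofWord_replicate_a (n : ℕ) : ofWord (List.replicate n BGen.a) = bA ^ n := by
  induction n with
  | zero => exact map_one _
  | succ n ih => rw [List.replicate_succ, ofWord_cons, ih, pow_succ']; rfl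

theorem exists_eq_c_pow_mul_b_mul (l : List BGen) (hl : BGen.b ∈ l) :
    ∃ (i : ℕ) (u : List BGen),
      ofWord l = bC ^ i * bB * ofWord u ∧ u.count BGen.b + 1 = l.count BGen.b := by
  induction l with
  | nil => cases hl
  | cons x l ih =>
    cases x with
    | b => exact ⟨0, l, by rw [ofWord_cons, pow_zero, one_mul]; rfl, by simp⟩
    | a =>
      obtain ⟨i, u, hu, hcount⟩ := ih (by simpa using hl)
      refine ⟨i, BGen.c :: u, ?_, by simpa using hcount⟩
      calc ofWord (BGen.a :: l) = bA * bC ^ i * bB * ofWord u := by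
            rw [ofWord_cons, hu]; simp only [mul_assoc]; rfl
        _ = bC ^ i * (bA * bB) * ofWord u := by
            rw [(Commute.pow_right a_mul_c i).eq]; simp only [mul_assoc]
        _ = bC ^ i * bB * ofWord (BGen.c :: u) := by
            rw [a_mul_b, ofWord_cons]; simp only [mul_assoc]; rfl
    | c =>
      obtain ⟨i, u, hu, hcount⟩ := ih (by simpa using hl)
      refine ⟨i + 1, u, ?_, by simpa using hcount⟩
      rw [ofWord_cons, hu, pow_succ']
      simp only [mul_assoc]
      rfl

theorem exists_eq_a_pow_mul_b_mul_b_mul (l : List BGen) (hl : 2 ≤ l.count BGen.b) :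
    ∃ (j : ℕ) (u : List BGen),
      ofWord l = bA ^ j * (bB * bB) * ofWord u ∧ u.count BGen.b + 2 = l.count BGen.b := by
  obtain ⟨i, u, hlu, hcount_u⟩ := exists_eq_c_pow_mul_b_mul l (List.count_pos_iff.mp (by omega))
  obtain ⟨j, v, huv, hcount_v⟩ := exists_eq_c_pow_mul_b_mul u (List.count_pos_iff.mp (by omega))
  refine ⟨j, List.replicate i BGen.a ++ v, ?_, ?_⟩
  · calc ofWord l = bC ^ i * (bB * bC ^ j) * bB * ofWord v := by
          rw [hlu, huv]; simp only [mul_assoc]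
      _ = bA ^ j * (bC ^ i * (bB * bB)) * ofWord v := by
          rw [b_mul_c_pow, ← mul_assoc, (Commute.pow_pow a_mul_c j i).symm.eq]; simp only [mul_assoc]
      _ = bA ^ j * (bB * bB) * ofWord (List.replicate i BGen.a ++ v) := by
          rw [c_pow_mul_b_mul_b, ofWord_append, ofWord_replicate_a]; simp only [mul_assoc]
  · simp only [List.count_append, List.count_replicate, beq_iff_eq, reduceCtorEq, ↓reduceIte,
      zero_add]
    omega

end BMonoid

open BMonoid in
/-- Any element of G⁺_{B_ii} containing the letter b at least 4 times is divisible by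
Δ₀ = bbb from the left and from the right. -/
theorem stmt_16 (w : FreeMonoid BGen)
    (hb : 4 ≤ (FreeMonoid.toList w).count BGen.b) :
    (∃ z : BMonoid, (conGen BRel).mk' w = (bB * bB * bB) * z) ∧
    (∃ z : BMonoid, (conGen BRel).mk' w = z * (bB * bB * bB)) := by
  obtain ⟨s, u, hwu, hcount⟩ := exists_eq_a_pow_mul_b_mul_b_mul w.toList (by omega)
  obtain ⟨t, v, huv, -⟩ := exists_eq_a_pow_mul_b_mul_b_mul u (by omega)
  have hleft : (conGen BRel).mk' w = Δ₀ * (bA ^ s * bC ^ t * bB * ofWord v) := calc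
    (conGen BRel).mk' w = bA ^ s * (bB * bB * bA ^ t) * (bB * bB) * ofWord v := by
        rw [← w.ofList_toList, ← ofWord, hwu, huv]; simp only [mul_assoc]
    _ = bA ^ s * bC ^ t * bB * Δ₀ * ofWord v := by
        rw [← c_pow_mul_b_mul_b]; simp only [mul_assoc]
    _ = Δ₀ * (bA ^ s * bC ^ t * bB * ofWord v) := by
        rw [← (commute_delta _).eq]; simp only [mul_assoc]
  exact ⟨⟨_, hleft⟩, ⟨_, hleft.trans (commute_delta _).eq⟩⟩
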